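/- Let H be the group presented by generators η₁, η₂, η₃, z₁₂, z₂₃ with relations: η₁³ = η₂³ = η₃³ = z₁₂³ = z₂₃³ = 1; z₁₂ and z₂₃ are central; η₂η₁ = z₁₂⁻¹η₁η₂; η₃η₁η₃⁻¹ = z₁₂η₁η₂²; η₃η₂η₃⁻¹ = z₂₃²η₂. Then H has order 243. -/
import Mathlib


namespace Stmt16

private def rη₁ : FreeGroup (Fin 5) := FreeGroup.of 0
private def rη₂ : FreeGroup (Fin 5) := FreeGroup.of 1
private def rη₃ : FreeGroup (Fin 5) := FreeGroup.of 2
private def rz₁₂ : FreeGroup (Fin 5) := FreeGroup.of 3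
private def rz₂₃ : FreeGroup (Fin 5) := FreeGroup.of 4

/-- Relators: `η₁³ = η₂³ = η₃³ = z₁₂³ = z₂₃³ = 1`, `z₁₂, z₂₃` central,
`η₂η₁ = z₁₂⁻¹η₁η₂`, `η₃η₁η₃⁻¹ = z₁₂η₁η₂²`, `η₃η₂η₃⁻¹ = z₂₃²η₂`. -/
def rels : Set (FreeGroup (Fin 5)) :=
  {rη₁ ^ 3, rη₂ ^ 3, rη₃ ^ 3, rz₁₂ ^ 3, rz₂₃ ^ 3,
   rz₁₂ * rη₁ * rz₁₂⁻¹ * rη₁⁻¹, rz₁₂ * rη₂ * rz₁₂⁻¹ * rη₂⁻¹,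
   rz₁₂ * rη₃ * rz₁₂⁻¹ * rη₃⁻¹, rz₁₂ * rz₂₃ * rz₁₂⁻¹ * rz₂₃⁻¹,
   rz₂₃ * rη₁ * rz₂₃⁻¹ * rη₁⁻¹, rz₂₃ * rη₂ * rz₂₃⁻¹ * rη₂⁻¹,
   rz₂₃ * rη₃ * rz₂₃⁻¹ * rη₃⁻¹,
   rη₂ * rη₁ * (rz₁₂⁻¹ * rη₁ * rη₂)⁻¹,
   rη₃ * rη₁ * rη₃⁻¹ * (rz₁₂ * rη₁ * rη₂ ^ 2)⁻¹,
   rη₃ * rη₂ * rη₃⁻¹ * (rz₂₃ ^ 2 * rη₂)⁻¹}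

/-- The presented group `H` of order 243. -/
abbrev H := PresentedGroup rels

def η₂ : H := PresentedGroup.of 1
def z₁₂ : H := PresentedGroup.of 3
def z₂₃ : H := PresentedGroup.of 4


section mem
/-- Explicit membership proofs avoiding defeq checks on `FreeGroup`. -/
private theorem mem0 : rη₁ ^ 3 ∈ rels := Set.mem_insert _ _
private theorem mem1 : rη₂ ^ 3 ∈ rels := Set.mem_insert_of_mem _ (Set.mem_insert _ _)
private theorem mem2 : rη₃ ^ 3 ∈ rels :=
  Set.mem_insert_of_mem _ (Set.mem_insert_of_mem _ (Set.mem_insert _ _))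
private theorem mem3 : rz₁₂ ^ 3 ∈ rels :=
  Set.mem_insert_of_mem _ (Set.mem_insert_of_mem _ (Set.mem_insert_of_mem _ (Set.mem_insert _ _)))
private theorem mem4 : rz₂₃ ^ 3 ∈ rels :=
  Set.mem_insert_of_mem _ (Set.mem_insert_of_mem _ (Set.mem_insert_of_mem _
    (Set.mem_insert_of_mem _ (Set.mem_insert _ _))))
private theorem mem5 : rz₁₂ * rη₁ * rz₁₂⁻¹ * rη₁⁻¹ ∈ rels :=
  Set.mem_insert_of_mem _ (Set.mem_insert_of_mem _ (Set.mem_insert_of_mem _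
    (Set.mem_insert_of_mem _ (Set.mem_insert_of_mem _ (Set.mem_insert _ _)))))
private theorem mem6 : rz₁₂ * rη₂ * rz₁₂⁻¹ * rη₂⁻¹ ∈ rels :=
  Set.mem_insert_of_mem _ (Set.mem_insert_of_mem _ (Set.mem_insert_of_mem _
    (Set.mem_insert_of_mem _ (Set.mem_insert_of_mem _ (Set.mem_insert_of_mem _
      (Set.mem_insert _ _))))))
private theorem mem7 : rz₁₂ * rη₃ * rz₁₂⁻¹ * rη₃⁻¹ ∈ rels :=
  Set.mem_insert_of_mem _ (Set.mem_insert_of_mem _ (Set.mem_insert_of_mem _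
    (Set.mem_insert_of_mem _ (Set.mem_insert_of_mem _ (Set.mem_insert_of_mem _
      (Set.mem_insert_of_mem _ (Set.mem_insert _ _)))))))
private theorem mem8 : rz₁₂ * rz₂₃ * rz₁₂⁻¹ * rz₂₃⁻¹ ∈ rels :=
  Set.mem_insert_of_mem _ (Set.mem_insert_of_mem _ (Set.mem_insert_of_mem _
    (Set.mem_insert_of_mem _ (Set.mem_insert_of_mem _ (Set.mem_insert_of_mem _
      (Set.mem_insert_of_mem _ (Set.mem_insert_of_mem _ (Set.mem_insert _ _))))))))
private theorem mem9 : rz₂₃ * rη₁ * rz₂₃⁻¹ * rη₁⁻¹ ∈ rels :=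
  Set.mem_insert_of_mem _ (Set.mem_insert_of_mem _ (Set.mem_insert_of_mem _
    (Set.mem_insert_of_mem _ (Set.mem_insert_of_mem _ (Set.mem_insert_of_mem _
      (Set.mem_insert_of_mem _ (Set.mem_insert_of_mem _ (Set.mem_insert_of_mem _
        (Set.mem_insert _ _)))))))))
private theorem mem10 : rz₂₃ * rη₂ * rz₂₃⁻¹ * rη₂⁻¹ ∈ rels :=
  Set.mem_insert_of_mem _ (Set.mem_insert_of_mem _ (Set.mem_insert_of_mem _
    (Set.mem_insert_of_mem _ (Set.mem_insert_of_mem _ (Set.mem_insert_of_mem _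
      (Set.mem_insert_of_mem _ (Set.mem_insert_of_mem _ (Set.mem_insert_of_mem _
        (Set.mem_insert_of_mem _ (Set.mem_insert _ _))))))))))
private theorem mem11 : rz₂₃ * rη₃ * rz₂₃⁻¹ * rη₃⁻¹ ∈ rels :=
  Set.mem_insert_of_mem _ (Set.mem_insert_of_mem _ (Set.mem_insert_of_mem _
    (Set.mem_insert_of_mem _ (Set.mem_insert_of_mem _ (Set.mem_insert_of_mem _
      (Set.mem_insert_of_mem _ (Set.mem_insert_of_mem _ (Set.mem_insert_of_mem _
        (Set.mem_insert_of_mem _ (Set.mem_insert_of_mem _ (Set.mem_insert _ _)))))))))))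
private theorem mem12 : rη₂ * rη₁ * (rz₁₂⁻¹ * rη₁ * rη₂)⁻¹ ∈ rels :=
  Set.mem_insert_of_mem _ (Set.mem_insert_of_mem _ (Set.mem_insert_of_mem _
    (Set.mem_insert_of_mem _ (Set.mem_insert_of_mem _ (Set.mem_insert_of_mem _
      (Set.mem_insert_of_mem _ (Set.mem_insert_of_mem _ (Set.mem_insert_of_mem _
        (Set.mem_insert_of_mem _ (Set.mem_insert_of_mem _ (Set.mem_insert_of_mem _
          (Set.mem_insert _ _))))))))))))
private theorem mem13 : rη₃ * rη₁ * rη₃⁻¹ * (rz₁₂ * rη₁ * rη₂ ^ 2)⁻¹ ∈ rels :=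
  Set.mem_insert_of_mem _ (Set.mem_insert_of_mem _ (Set.mem_insert_of_mem _
    (Set.mem_insert_of_mem _ (Set.mem_insert_of_mem _ (Set.mem_insert_of_mem _
      (Set.mem_insert_of_mem _ (Set.mem_insert_of_mem _ (Set.mem_insert_of_mem _
        (Set.mem_insert_of_mem _ (Set.mem_insert_of_mem _ (Set.mem_insert_of_mem _
          (Set.mem_insert_of_mem _ (Set.mem_insert _ _)))))))))))))
private theorem mem14 : rη₃ * rη₂ * rη₃⁻¹ * (rz₂₃ ^ 2 * rη₂)⁻¹ ∈ rels :=
  Set.mem_insert_of_mem _ (Set.mem_insert_of_mem _ (Set.mem_insert_of_mem _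
    (Set.mem_insert_of_mem _ (Set.mem_insert_of_mem _ (Set.mem_insert_of_mem _
      (Set.mem_insert_of_mem _ (Set.mem_insert_of_mem _ (Set.mem_insert_of_mem _
        (Set.mem_insert_of_mem _ (Set.mem_insert_of_mem _ (Set.mem_insert_of_mem _
          (Set.mem_insert_of_mem _ (Set.mem_insert_of_mem _ rfl)))))))))))))
end mem

/-! ### A concrete model of the group, of order 243 -/

@[ext]
structure Gc where
  p : ZMod 3
  q : ZMod 3
  a : ZMod 3
  b : ZMod 3
  c : ZMod 3
deriving DecidableEq, Fintype

/-- Multiplication corresponding to normal forms `z^p w^q η₁^a η₂^b η₃^c`. -/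
def gmul (x y : Gc) : Gc :=
  ⟨x.p + y.p + x.c * (2 * y.a - y.a ^ 2) - x.b * y.a,
   x.q + y.q + 2 * x.c * y.b + 2 * y.a * x.c * (x.c - 1),
   x.a + y.a, x.b + y.b + 2 * x.c * y.a, x.c + y.c⟩

def ginv (x : Gc) : Gc :=
  ⟨-x.p + 2 * x.c * x.a + x.c * x.a ^ 2 - x.a * x.b,
   -x.q + 2 * x.c * x.b - 2 * x.a * x.c * (x.c + 1),
   -x.a, -x.b + 2 * x.c * x.a, -x.c⟩

instance : Group Gc where
  mul := gmul
  one := ⟨0, 0, 0, 0, 0⟩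
  inv := ginv
  mul_assoc x y z := by
    show gmul (gmul x y) z = gmul x (gmul y z)
    simp only [gmul]
    ext <;> dsimp only <;> ring
  one_mul x := by
    show gmul ⟨0, 0, 0, 0, 0⟩ x = x
    simp only [gmul]
    ext <;> dsimp only <;> ring
  mul_one x := by
    show gmul x ⟨0, 0, 0, 0, 0⟩ = x
    simp only [gmul]
    ext <;> dsimp only <;> ring
  inv_mul_cancel x := by
    show gmul (ginv x) x = ⟨0, 0, 0, 0, 0⟩
    simp only [gmul, ginv]
    ext <;> dsimp only <;> ring

def toG : Fin 5 → Gc :=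
  ![⟨0, 0, 1, 0, 0⟩, ⟨0, 0, 0, 1, 0⟩, ⟨0, 0, 0, 0, 1⟩, ⟨1, 0, 0, 0, 0⟩, ⟨0, 1, 0, 0, 0⟩]

theorem hrels : ∀ r ∈ rels, FreeGroup.lift toG r = 1 := by
  intro r hr
  simp only [rels, Set.mem_insert_iff, Set.mem_singleton_iff] at hr
  rcases hr with h | h | h | h | h | h | h | h | h | h | h | h | h | h | h <;> subst h <;>
    simp only [rη₁, rη₂, rη₃, rz₁₂, rz₂₃, map_mul, map_pow, map_inv, FreeGroup.lift_apply_of] <;>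
    decide

def φ : H →* Gc := PresentedGroup.toGroup hrels

/-! ### Elements and relations in `H` -/

def η₁ : H := PresentedGroup.of 0
def η₃ : H := PresentedGroup.of 2

theorem rel_one {r : FreeGroup (Fin 5)} (h : r ∈ rels) : PresentedGroup.mk rels r = 1 :=
  (QuotientGroup.eq_one_iff r).mpr (Subgroup.subset_normalClosure h)

theorem η₁_cube : η₁ ^ 3 = 1 := by
  have := rel_one mem0
  rwa [map_pow] at this

theorem η₂_cube : η₂ ^ 3 = 1 := by
  have := rel_one mem1
  rwa [map_pow] at this

theorem η₃_cube : η₃ ^ 3 = 1 := by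
  have := rel_one mem2
  rwa [map_pow] at this

theorem z₁₂_cube : z₁₂ ^ 3 = 1 := by
  have := rel_one mem3
  rwa [map_pow] at this

theorem z₂₃_cube : z₂₃ ^ 3 = 1 := by
  have := rel_one mem4
  rwa [map_pow] at this

theorem z₁₂_comm (g : H) : Commute z₁₂ g := by
  have hg : g ∈ Subgroup.centralizer {z₁₂} := by
    refine PresentedGroup.generated_by rels _ (fun j => ?_) g
    rw [Subgroup.mem_centralizer_iff]
    intro h hh
    rw [Set.mem_singleton_iff] at hh
    subst hh
    fin_cases j
    · have := rel_one mem5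
      simp only [map_mul, map_inv] at this
      exact (commutatorElement_eq_one_iff_commute.mp this).eq
    · have := rel_one mem6
      simp only [map_mul, map_inv] at this
      exact (commutatorElement_eq_one_iff_commute.mp this).eq
    · have := rel_one mem7
      simp only [map_mul, map_inv] at this
      exact (commutatorElement_eq_one_iff_commute.mp this).eq
    · rfl
    · have := rel_one mem8
      simp only [map_mul, map_inv] at this
      exact (commutatorElement_eq_one_iff_commute.mp this).eq
  exact (commute_iff_eq _ _).mpr (Subgroup.mem_centralizer_iff.mp hg z₁₂ rfl)

theorem z₂₃_comm (g : H) : Commute z₂₃ g := by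
  have hg : g ∈ Subgroup.centralizer {z₂₃} := by
    refine PresentedGroup.generated_by rels _ (fun j => ?_) g
    rw [Subgroup.mem_centralizer_iff]
    intro h hh
    rw [Set.mem_singleton_iff] at hh
    subst hh
    fin_cases j
    · have := rel_one mem9
      simp only [map_mul, map_inv] at this
      exact (commutatorElement_eq_one_iff_commute.mp this).eq
    · have := rel_one mem10
      simp only [map_mul, map_inv] at this
      exact (commutatorElement_eq_one_iff_commute.mp this).eq
    · have := rel_one mem11
      simp only [map_mul, map_inv] at this
      exact (commutatorElement_eq_one_iff_commute.mp this).eq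
    · have := rel_one mem8
      simp only [map_mul, map_inv] at this
      exact ((commutatorElement_eq_one_iff_commute.mp this).eq).symm
    · rfl
  exact (commute_iff_eq _ _).mpr (Subgroup.mem_centralizer_iff.mp hg z₂₃ rfl)

theorem rel21 : η₂ * η₁ = z₁₂⁻¹ * η₁ * η₂ := by
  have := rel_one mem12
  simp only [map_mul, map_inv] at this
  exact mul_inv_eq_one.mp this

theorem rel31 : η₃ * η₁ = z₁₂ * η₁ * η₂ ^ 2 * η₃ := by
  have := rel_one mem13
  simp only [map_mul, map_inv, map_pow] at this
  have h2 : η₃ * η₁ * η₃⁻¹ = z₁₂ * η₁ * η₂ ^ 2 := mul_inv_eq_one.mp this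
  calc η₃ * η₁ = η₃ * η₁ * η₃⁻¹ * η₃ := by group
  _ = z₁₂ * η₁ * η₂ ^ 2 * η₃ := by rw [h2]

theorem rel32 : η₃ * η₂ = z₂₃ ^ 2 * η₂ * η₃ := by
  have := rel_one mem14
  simp only [map_mul, map_inv, map_pow] at this
  have h2 : η₃ * η₂ * η₃⁻¹ = z₂₃ ^ 2 * η₂ := mul_inv_eq_one.mp this
  calc η₃ * η₂ = η₃ * η₂ * η₃⁻¹ * η₃ := by group
  _ = z₂₃ ^ 2 * η₂ * η₃ := by rw [h2]

/-! ### Powers indexed by `ZMod 3` -/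

theorem pow_mod {G : Type*} [Group G] {g : G} (h : g ^ 3 = 1) (n : ℕ) :
    g ^ (n % 3) = g ^ n := by
  conv_rhs => rw [← Nat.mod_add_div n 3, pow_add, pow_mul, h, one_pow, mul_one]

/-- `g` raised to a `ZMod 3` exponent. -/
def pw (g : H) (x : ZMod 3) : H := g ^ x.val

theorem pw_add {g : H} (h : g ^ 3 = 1) (x y : ZMod 3) :
    pw g (x + y) = pw g x * pw g y := by
  simp only [pw]
  rw [ZMod.val_add, pow_mod h, pow_add]

theorem pw_zero (g : H) : pw g 0 = 1 := by
  simp only [pw, show ((0 : ZMod 3)).val = 0 from rfl, pow_zero]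

theorem pw_one' (g : H) : pw g 1 = g := by
  simp only [pw, show ((1 : ZMod 3)).val = 1 from rfl, pow_one]

theorem pw_two (g : H) : pw g 2 = g * g := by
  simp only [pw, show ((2 : ZMod 3)).val = 2 from rfl, pow_two]

theorem mul3 (g : H) : g * (g * g) = g ^ 3 := by
  rw [show (3 : ℕ) = 1 + 1 + 1 from rfl, pow_add, pow_add, pow_one, mul_assoc]

theorem mulpw' {g : H} (h : g ^ 3 = 1) (x : ZMod 3) : g * pw g x = pw g (x + 1) := by
  rw [add_comm, pw_add h, pw_one']

theorem mulpw {g : H} (h : g ^ 3 = 1) (x : ZMod 3) (t : H) :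
    g * (pw g x * t) = pw g (x + 1) * t := by
  rw [← mul_assoc, mulpw' h]

theorem pwfold {g : H} (h : g ^ 3 = 1) (x y : ZMod 3) (t : H) :
    pw g x * (pw g y * t) = pw g (x + y) * t := by
  rw [← mul_assoc, ← pw_add h]

theorem mvz (g : H) (y : ZMod 3) (t : H) :
    g * (pw z₁₂ y * t) = pw z₁₂ y * (g * t) := by
  rw [← mul_assoc, show g * pw z₁₂ y = pw z₁₂ y * g from (((z₁₂_comm g).pow_left y.val).eq).symm,
    mul_assoc]

theorem mvw (g : H) (y : ZMod 3) (t : H) :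
    g * (pw z₂₃ y * t) = pw z₂₃ y * (g * t) := by
  rw [← mul_assoc, show g * pw z₂₃ y = pw z₂₃ y * g from (((z₂₃_comm g).pow_left y.val).eq).symm,
    mul_assoc]

/-! ### Bare-word rewriting lemmas -/

theorem zinv2 : z₁₂⁻¹ = z₁₂ * z₁₂ :=
  inv_eq_of_mul_eq_one_right (by rw [mul3]; exact z₁₂_cube)

theorem bz1 (x : H) : η₁ * (z₁₂ * x) = z₁₂ * (η₁ * x) := by
  rw [← mul_assoc, ← (z₁₂_comm η₁).eq, mul_assoc]

theorem bz2 (x : H) : η₂ * (z₁₂ * x) = z₁₂ * (η₂ * x) := by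
  rw [← mul_assoc, ← (z₁₂_comm η₂).eq, mul_assoc]

theorem bw1 (x : H) : η₁ * (z₂₃ * x) = z₂₃ * (η₁ * x) := by
  rw [← mul_assoc, ← (z₂₃_comm η₁).eq, mul_assoc]

theorem bw2 (x : H) : η₂ * (z₂₃ * x) = z₂₃ * (η₂ * x) := by
  rw [← mul_assoc, ← (z₂₃_comm η₂).eq, mul_assoc]

theorem b21 (x : H) : η₂ * (η₁ * x) = z₁₂ * (z₁₂ * (η₁ * (η₂ * x))) := by
  have h : η₂ * η₁ = z₁₂ * (z₁₂ * (η₁ * η₂)) := by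
    rw [rel21, zinv2]
    simp only [mul_assoc]
  calc η₂ * (η₁ * x) = η₂ * η₁ * x := (mul_assoc _ _ _).symm
  _ = z₁₂ * (z₁₂ * (η₁ * η₂)) * x := by rw [h]
  _ = z₁₂ * (z₁₂ * (η₁ * (η₂ * x))) := by simp only [mul_assoc]

theorem b31 (x : H) : η₃ * (η₁ * x) = z₁₂ * (η₁ * (η₂ * (η₂ * (η₃ * x)))) := by
  have h : η₃ * η₁ = z₁₂ * (η₁ * (η₂ * (η₂ * η₃))) := by
    rw [rel31, pow_two]
    simp only [mul_assoc]
  calc η₃ * (η₁ * x) = η₃ * η₁ * x := (mul_assoc _ _ _).symm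
  _ = z₁₂ * (η₁ * (η₂ * (η₂ * η₃))) * x := by rw [h]
  _ = z₁₂ * (η₁ * (η₂ * (η₂ * (η₃ * x)))) := by simp only [mul_assoc]

theorem b32 (x : H) : η₃ * (η₂ * x) = z₂₃ * (z₂₃ * (η₂ * (η₃ * x))) := by
  have h : η₃ * η₂ = z₂₃ * (z₂₃ * (η₂ * η₃)) := by
    rw [rel32, pow_two]
    simp only [mul_assoc]
  calc η₃ * (η₂ * x) = η₃ * η₂ * x := (mul_assoc _ _ _).symm
  _ = z₂₃ * (z₂₃ * (η₂ * η₃)) * x := by rw [h]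
  _ = z₂₃ * (z₂₃ * (η₂ * (η₃ * x))) := by simp only [mul_assoc]

theorem cz (x : H) : z₁₂ * (z₁₂ * (z₁₂ * x)) = x := by
  calc z₁₂ * (z₁₂ * (z₁₂ * x)) = z₁₂ * (z₁₂ * z₁₂) * x := by simp only [mul_assoc]
  _ = x := by rw [mul3, z₁₂_cube, one_mul]

theorem cw (x : H) : z₂₃ * (z₂₃ * (z₂₃ * x)) = x := by
  calc z₂₃ * (z₂₃ * (z₂₃ * x)) = z₂₃ * (z₂₃ * z₂₃) * x := by simp only [mul_assoc]
  _ = x := by rw [mul3, z₂₃_cube, one_mul]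

theorem c2 (x : H) : η₂ * (η₂ * (η₂ * x)) = x := by
  calc η₂ * (η₂ * (η₂ * x)) = η₂ * (η₂ * η₂) * x := by simp only [mul_assoc]
  _ = x := by rw [mul3, η₂_cube, one_mul]

theorem three : ∀ x : ZMod 3, x = 0 ∨ x = 1 ∨ x = 2 := by decide

/-! ### Crossing lemmas -/

theorem La (a : ZMod 3) (x : H) :
    η₃ * (pw η₁ a * x) =
      pw z₁₂ (2 * a * a - a) * (pw η₁ a * (pw η₂ (a + a) * (η₃ * x))) := by
  rcases three a with rfl | rfl | rfl
  · simp only [show (2 * (0 : ZMod 3) * 0 - 0 : ZMod 3) = 0 by decide,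
      show ((0 : ZMod 3) + 0 : ZMod 3) = 0 by decide, pw_zero, one_mul]
  · simp only [show (2 * (1 : ZMod 3) * 1 - 1 : ZMod 3) = 1 by decide,
      show ((1 : ZMod 3) + 1 : ZMod 3) = 2 by decide, pw_one', pw_two]
    simp only [b31, mul_assoc]
  · simp only [show (2 * (2 : ZMod 3) * 2 - 2 : ZMod 3) = 0 by decide,
      show ((2 : ZMod 3) + 2 : ZMod 3) = 1 by decide, pw_zero, pw_one', pw_two, one_mul]
    simp only [mul_assoc, b31, b21, bz1, bz2, cz, c2]

theorem Lb (b : ZMod 3) (x : H) :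
    η₃ * (pw η₂ b * x) = pw z₂₃ (b + b) * (pw η₂ b * (η₃ * x)) := by
  rcases three b with rfl | rfl | rfl
  · simp only [show ((0 : ZMod 3) + 0 : ZMod 3) = 0 by decide, pw_zero, one_mul]
  · simp only [show ((1 : ZMod 3) + 1 : ZMod 3) = 2 by decide, pw_one', pw_two]
    simp only [b32, mul_assoc]
  · simp only [show ((2 : ZMod 3) + 2 : ZMod 3) = 1 by decide, pw_one', pw_two]
    simp only [mul_assoc, b32, bw2, cw]

theorem Lc (a : ZMod 3) (x : H) :
    η₂ * (pw η₁ a * x) = pw z₁₂ (a + a) * (pw η₁ a * (η₂ * x)) := by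
  rcases three a with rfl | rfl | rfl
  · simp only [show ((0 : ZMod 3) + 0 : ZMod 3) = 0 by decide, pw_zero, one_mul]
  · simp only [show ((1 : ZMod 3) + 1 : ZMod 3) = 2 by decide, pw_one', pw_two]
    simp only [b21, mul_assoc]
  · simp only [show ((2 : ZMod 3) + 2 : ZMod 3) = 1 by decide, pw_one', pw_two]
    simp only [mul_assoc, b21, bz1, bz2, cz]

/-! ### The normal form map -/

def nf (v : Gc) : H :=
  pw z₁₂ v.p * (pw z₂₃ v.q * (pw η₁ v.a * (pw η₂ v.b * pw η₃ v.c)))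

/-! ### Left multiplication by generators preserves normal forms -/

theorem of_cube (i : Fin 5) : (PresentedGroup.of (rels := rels) i) ^ 3 = 1 := by
  fin_cases i
  · exact η₁_cube
  · exact η₂_cube
  · exact η₃_cube
  · exact z₁₂_cube
  · exact z₂₃_cube

theorem step (i : Fin 5) (v : Gc) :
    ∃ w : Gc, (PresentedGroup.of (rels := rels) i) * nf v = nf w := by
  obtain ⟨p, q, a, b, c⟩ := v
  fin_cases i
  · refine ⟨⟨p, q, a + 1, b, c⟩, ?_⟩
    show η₁ * (pw z₁₂ p * (pw z₂₃ q * (pw η₁ a * (pw η₂ b * pw η₃ c)))) =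
      pw z₁₂ p * (pw z₂₃ q * (pw η₁ (a + 1) * (pw η₂ b * pw η₃ c)))
    rw [mvz η₁, mvw η₁, mulpw η₁_cube]
  · refine ⟨⟨p + (a + a), q, a, b + 1, c⟩, ?_⟩
    show η₂ * (pw z₁₂ p * (pw z₂₃ q * (pw η₁ a * (pw η₂ b * pw η₃ c)))) =
      pw z₁₂ (p + (a + a)) * (pw z₂₃ q * (pw η₁ a * (pw η₂ (b + 1) * pw η₃ c)))
    rw [mvz η₂, mvw η₂, Lc, mulpw η₂_cube, mvz (pw z₂₃ q), pwfold z₁₂_cube]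
  · refine ⟨⟨p + (2 * a * a - a), q + (b + b), a, (a + a) + b, c + 1⟩, ?_⟩
    show η₃ * (pw z₁₂ p * (pw z₂₃ q * (pw η₁ a * (pw η₂ b * pw η₃ c)))) =
      pw z₁₂ (p + (2 * a * a - a)) *
        (pw z₂₃ (q + (b + b)) * (pw η₁ a * (pw η₂ ((a + a) + b) * pw η₃ (c + 1))))
    rw [mvz η₃, mvw η₃, La, Lb, mulpw' η₃_cube, mvz (pw z₂₃ q), pwfold z₁₂_cube,
      mvw (pw η₂ (a + a)), mvw (pw η₁ a), pwfold z₂₃_cube, pwfold η₂_cube]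
  · refine ⟨⟨p + 1, q, a, b, c⟩, ?_⟩
    show z₁₂ * (pw z₁₂ p * (pw z₂₃ q * (pw η₁ a * (pw η₂ b * pw η₃ c)))) =
      pw z₁₂ (p + 1) * (pw z₂₃ q * (pw η₁ a * (pw η₂ b * pw η₃ c)))
    rw [mulpw z₁₂_cube]
  · refine ⟨⟨p, q + 1, a, b, c⟩, ?_⟩
    show z₂₃ * (pw z₁₂ p * (pw z₂₃ q * (pw η₁ a * (pw η₂ b * pw η₃ c)))) =
      pw z₁₂ p * (pw z₂₃ (q + 1) * (pw η₁ a * (pw η₂ b * pw η₃ c)))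
    rw [mvz z₂₃, mulpw z₂₃_cube]

theorem key (g : H) : ∀ v : Gc, ∃ w : Gc, g * nf v = nf w := by
  have hg : g ∈ Submonoid.closure
      (Set.range (PresentedGroup.of (rels := rels)) ∪
        (Set.range (PresentedGroup.of (rels := rels)))⁻¹) := by
    rw [← Subgroup.closure_toSubmonoid, PresentedGroup.closure_range_of]
    exact Subgroup.mem_top g
  induction hg using Submonoid.closure_induction with
  | one => exact fun v => ⟨v, by rw [one_mul]⟩
  | mul x y hx hy ihx ihy =>
    intro v
    obtain ⟨w1, h1⟩ := ihy v
    obtain ⟨w2, h2⟩ := ihx w1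
    exact ⟨w2, by rw [mul_assoc, h1, h2]⟩
  | mem x hx =>
    rcases hx with ⟨i, rfl⟩ | hx
    · exact step i
    · rw [Set.mem_inv] at hx
      obtain ⟨i, hi⟩ := hx
      have hxi : x = (PresentedGroup.of (rels := rels) i)⁻¹ := by
        rw [hi, inv_inv]
      have hsq : (PresentedGroup.of (rels := rels) i)⁻¹ =
          PresentedGroup.of (rels := rels) i * PresentedGroup.of (rels := rels) i :=
        inv_eq_of_mul_eq_one_right (by rw [mul3]; exact of_cube i)
      intro v
      obtain ⟨w1, h1⟩ := step i v
      obtain ⟨w2, h2⟩ := step i w1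
      exact ⟨w2, by rw [hxi, hsq, mul_assoc, h1, h2]⟩

theorem nf_surjective : Function.Surjective nf := by
  intro g
  obtain ⟨w, hw⟩ := key g ⟨0, 0, 0, 0, 0⟩
  have h0 : nf ⟨0, 0, 0, 0, 0⟩ = 1 := by
    show pw z₁₂ 0 * (pw z₂₃ 0 * (pw η₁ 0 * (pw η₂ 0 * pw η₃ 0))) = 1
    simp [pw_zero]
  exact ⟨w, by rw [← hw, h0, mul_one]⟩

/-! ### `φ ∘ nf = id`, hence `nf` is injective -/

theorem gpowz (n : ℕ) : (⟨1, 0, 0, 0, 0⟩ : Gc) ^ n = ⟨(n : ZMod 3), 0, 0, 0, 0⟩ := by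
  induction n with
  | zero => ext <;> simp <;> rfl
  | succ n ih =>
    rw [pow_succ, ih]
    show gmul _ _ = _
    simp only [gmul]
    ext <;> push_cast <;> ring

theorem gpoww (n : ℕ) : (⟨0, 1, 0, 0, 0⟩ : Gc) ^ n = ⟨0, (n : ZMod 3), 0, 0, 0⟩ := by
  induction n with
  | zero => ext <;> simp <;> rfl
  | succ n ih =>
    rw [pow_succ, ih]
    show gmul _ _ = _
    simp only [gmul]
    ext <;> push_cast <;> ring

theorem gpow1 (n : ℕ) : (⟨0, 0, 1, 0, 0⟩ : Gc) ^ n = ⟨0, 0, (n : ZMod 3), 0, 0⟩ := by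
  induction n with
  | zero => ext <;> simp <;> rfl
  | succ n ih =>
    rw [pow_succ, ih]
    show gmul _ _ = _
    simp only [gmul]
    ext <;> push_cast <;> ring

theorem gpow2 (n : ℕ) : (⟨0, 0, 0, 1, 0⟩ : Gc) ^ n = ⟨0, 0, 0, (n : ZMod 3), 0⟩ := by
  induction n with
  | zero => ext <;> simp <;> rfl
  | succ n ih =>
    rw [pow_succ, ih]
    show gmul _ _ = _
    simp only [gmul]
    ext <;> push_cast <;> ring

theorem gpow3 (n : ℕ) : (⟨0, 0, 0, 0, 1⟩ : Gc) ^ n = ⟨0, 0, 0, 0, (n : ZMod 3)⟩ := by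
  induction n with
  | zero => ext <;> simp <;> rfl
  | succ n ih =>
    rw [pow_succ, ih]
    show gmul _ _ = _
    simp only [gmul]
    ext <;> push_cast <;> ring

theorem hφ1 : φ η₁ = (⟨0, 0, 1, 0, 0⟩ : Gc) := PresentedGroup.toGroup.of hrels
theorem hφ2 : φ η₂ = (⟨0, 0, 0, 1, 0⟩ : Gc) := PresentedGroup.toGroup.of hrels
theorem hφ3 : φ η₃ = (⟨0, 0, 0, 0, 1⟩ : Gc) := PresentedGroup.toGroup.of hrels
theorem hφz : φ z₁₂ = (⟨1, 0, 0, 0, 0⟩ : Gc) := PresentedGroup.toGroup.of hrels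
theorem hφw : φ z₂₃ = (⟨0, 1, 0, 0, 0⟩ : Gc) := PresentedGroup.toGroup.of hrels

theorem φ_nf (v : Gc) : φ (nf v) = v := by
  obtain ⟨p, q, a, b, c⟩ := v
  show φ (pw z₁₂ p * (pw z₂₃ q * (pw η₁ a * (pw η₂ b * pw η₃ c)))) = _
  simp only [pw, map_mul, map_pow, hφz, hφw, hφ1, hφ2, hφ3]
  rw [gpowz, gpoww, gpow1, gpow2, gpow3]
  have hp : ((p.val : ℕ) : ZMod 3) = p := ZMod.natCast_rightInverse p
  have hq : ((q.val : ℕ) : ZMod 3) = q := ZMod.natCast_rightInverse q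
  have ha : ((a.val : ℕ) : ZMod 3) = a := ZMod.natCast_rightInverse a
  have hb : ((b.val : ℕ) : ZMod 3) = b := ZMod.natCast_rightInverse b
  have hc : ((c.val : ℕ) : ZMod 3) = c := ZMod.natCast_rightInverse c
  show gmul _ (gmul _ (gmul _ (gmul _ _))) = _
  simp only [gmul]
  ext <;> dsimp only <;> simp only [hp, hq, ha, hb, hc] <;> ring

theorem nf_injective : Function.Injective nf := by
  intro v w h
  have := congrArg φ h
  rwa [φ_nf, φ_nf] at this

theorem card_presented_eq_243 : Nat.card H = 243 := by
  rw [← Nat.card_eq_of_bijective nf ⟨nf_injective, nf_surjective⟩,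
    Nat.card_eq_fintype_card]
  rfl

end Stmt16
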